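/- arXiv:1610.01696 — 4 statements merged into one kernel-verified Lean document; each statement's English description precedes it below -/
import Mathlib

section
/- (Dyson identity.) Let 𝔅 be a unital Banach algebra, let A, B : ℝ → 𝔅 be continuous, and let Y : ℝ → 𝔅 and Z : ℝ × ℝ → 𝔅 be continuously differentiable maps satisfying Y(t₀) = 1, Y'(t) = Y(t)·A(t) for all t, and Z(t,t) = 1 with ∂Z/∂s (t,s) = −B(s)·Z(t,s) for all s, t. Then for all t ≥ t₀, Y(t) − Z(t,t₀) = ∫_{t₀}^{t} Y(s)·(A(s) − B(s))·Z(t,s) ds. -/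
open intervalIntegral

/-! The product `s ↦ Y(s) Z(t,s)` has derivative `Y(s) (A(s) - B(s)) Z(t,s)`, so the identity is the
fundamental theorem of calculus for it on `[t₀, t]`, with the boundary values
`Y(t) Z(t,t) = Y(t)` and `Y(t₀) Z(t,t₀) = Z(t,t₀)`. -/

theorem HasDerivAt.mul_of_mul_right_of_neg_mul_left {𝕜 𝔸 : Type*} [NontriviallyNormedField 𝕜]
    [NormedRing 𝔸] [NormedAlgebra 𝕜 𝔸] {f g : 𝕜 → 𝔸} {a b : 𝔸} {x : 𝕜}
    (hf : HasDerivAt f (f x * a) x) (hg : HasDerivAt g (-(b * g x)) x) :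
    HasDerivAt (fun y => f y * g y) (f x * (a - b) * g x) x := by
  convert hf.fun_mul hg using 1
  noncomm_ring

theorem dyson_identity_general {𝔅 : Type*} [NormedRing 𝔅] [NormedAlgebra ℝ 𝔅] [CompleteSpace 𝔅]
    (A B : ℝ → 𝔅) (hA : Continuous A) (hB : Continuous B)
    (Y : ℝ → 𝔅) (Z : ℝ → ℝ → 𝔅) (t₀ : ℝ)
    (hY₀ : Y t₀ = 1)
    (hY : ∀ t : ℝ, HasDerivAt Y (Y t * A t) t)
    (hZ_diag : ∀ t : ℝ, Z t t = 1)
    (hZ : ∀ t s : ℝ, HasDerivAt (fun u => Z t u) (-(B s * Z t s)) s) :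
    ∀ t : ℝ, t₀ ≤ t →
      Y t - Z t t₀ = ∫ s in t₀..t, Y s * (A s - B s) * Z t s := by
  intro t _
  have hY_cont : Continuous Y := continuous_iff_continuousAt.2 fun s => (hY s).continuousAt
  have hZt_cont : Continuous (Z t) := continuous_iff_continuousAt.2 fun s => (hZ t s).continuousAt
  have hint : IntervalIntegrable (fun s => Y s * (A s - B s) * Z t s) MeasureTheory.volume t₀ t :=
    ((hY_cont.mul (hA.sub hB)).mul hZt_cont).intervalIntegrable t₀ t
  rw [integral_eq_sub_of_hasDerivAt (fun s _ => (hY s).mul_of_mul_right_of_neg_mul_left (hZ t s)) hint,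
    hZ_diag, hY₀, mul_one, one_mul]

/-- **The Dyson identity.**  Let `𝔅` be a unital (real) Banach algebra, `A B : ℝ → 𝔅`
continuous, `Y` a C¹ solution of `Y(t₀) = 1`, `Y'(t) = Y(t)·A(t)`, and `Z(t,s)` a C¹ solution of
`Z(t,t) = 1`, `∂Z/∂s(t,s) = −B(s)·Z(t,s)`.  Then for all `t ≥ t₀`,
`Y(t) − Z(t,t₀) = ∫_{t₀}^{t} Y(s)·(A(s) − B(s))·Z(t,s) ds`. -/
theorem dyson_identity {𝔅 : Type*} [NormedRing 𝔅] [NormedAlgebra ℝ 𝔅] [CompleteSpace 𝔅]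
    (A B : ℝ → 𝔅) (hA : Continuous A) (hB : Continuous B)
    (Y : ℝ → 𝔅) (Z : ℝ → ℝ → 𝔅) (t₀ : ℝ)
    (hY₀ : Y t₀ = 1)
    (hY : ∀ t : ℝ, HasDerivAt Y (Y t * A t) t)
    (hZ_diag : ∀ t : ℝ, Z t t = 1)
    (hZ : ∀ t s : ℝ, HasDerivAt (fun u => Z t u) (-(B s * Z t s)) s)
    (hZ_cont : Continuous fun p : ℝ × ℝ => Z p.1 p.2) :
    ∀ t : ℝ, t₀ ≤ t →
      Y t - Z t t₀ = ∫ s in t₀..t, Y s * (A s - B s) * Z t s :=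
  dyson_identity_general A B hA hB Y Z t₀ hY₀ hY hZ_diag hZ
end

section
/- (Nakajima–Mori–Zwanzig operator identity.) Let 𝔅 be a unital Banach algebra, L : ℝ → 𝔅 continuous, 𝒫 ∈ 𝔅 an idempotent (𝒫² = 𝒫), and set 𝒬 = 1 − 𝒫. Let E : ℝ → 𝔅 satisfy E(t₀) = 1 and E'(t) = E(t)·L(t) for all t, and let G : ℝ × ℝ → 𝔅 be continuously differentiable with G(t,t) = 1, ∂G/∂t (t,s) = G(t,s)·𝒬·L(t), and ∂G/∂s (t,s) = −𝒬·L(s)·G(t,s) for all s ≤ t. Then for all t ≥ t₀, d/dt [E(t)·𝒫] = E(t)·𝒫·L(t)·𝒫 + G(t,t₀)·𝒬·L(t)·𝒫 + ∫_{t₀}^{t} E(s)·𝒫·L(s)·G(t,s)·𝒬·L(t)·𝒫 ds. -/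
open intervalIntegral Set

/-!
Along `s ↦ E(s)`, the backward equation `∂ₛF = -𝒬 L(s) F` for `F = G(t, ·) 𝒬 L(t) 𝒫` cancels
the `𝒬`-part of `E' = E L`, so `(E F)' = E 𝒫 L F` and integrating over `[t₀, t]` gives the Dyson
identity `E(t) 𝒬 L(t) 𝒫 = G(t,t₀) 𝒬 L(t) 𝒫 + ∫ E 𝒫 L G(t,·) 𝒬 L(t) 𝒫`. Splitting
`E(t) L(t) 𝒫 = E(t) 𝒫 L(t) 𝒫 + E(t) 𝒬 L(t) 𝒫` then yields the identity.
-/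

section Duhamel

variable {𝔅 : Type*} [NormedRing 𝔅] [NormedAlgebra ℝ 𝔅] [CompleteSpace 𝔅]

theorem integral_duhamel_eq_sub {L E F : ℝ → 𝔅} {P : 𝔅} {a b : ℝ} (hab : a ≤ b)
    (hL : ContinuousOn L (Icc a b))
    (hE : ∀ s ∈ Icc a b, HasDerivAt E (E s * L s) s)
    (hF : ∀ s ∈ Icc a b, HasDerivAt F (-((1 - P) * L s * F s)) s) :
    ∫ s in a..b, E s * P * L s * F s = E b * F b - E a * F a := by
  rw [← uIcc_of_le hab] at hL hE hF
  have hEcont : ContinuousOn E (uIcc a b) := fun s hs => (hE s hs).continuousAt.continuousWithinAt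
  have hFcont : ContinuousOn F (uIcc a b) := fun s hs => (hF s hs).continuousAt.continuousWithinAt
  have hcont : ContinuousOn (fun s => E s * P * L s * F s) (uIcc a b) := by fun_prop
  exact integral_eq_sub_of_hasDerivAt (f := fun s => E s * F s)
    (fun s hs => ((hE s hs).mul (hF s hs)).congr_deriv (by noncomm_ring)) hcont.intervalIntegrable

end Duhamel

theorem nmz_operator_identity_general {𝔅 : Type*} [NormedRing 𝔅] [NormedAlgebra ℝ 𝔅] [CompleteSpace 𝔅]
    (L : ℝ → 𝔅) (hL : Continuous L)
    (P : 𝔅) (Q : 𝔅) (hQ : Q = 1 - P)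
    (E : ℝ → 𝔅) (t₀ : ℝ)
    (hE₀ : E t₀ = 1)
    (hE : ∀ t : ℝ, HasDerivAt E (E t * L t) t)
    (G : ℝ → ℝ → 𝔅)
    (hG_diag : ∀ t : ℝ, G t t = 1)
    (hG_s : ∀ s t : ℝ, s ≤ t → HasDerivAt (fun u => G t u) (-(Q * L s * G t s)) s) :
    ∀ t : ℝ, t₀ ≤ t →
      HasDerivAt (fun u => E u * P)
        (E t * P * L t * P + G t t₀ * Q * L t * P +
          ∫ s in t₀..t, E s * P * L s * G t s * Q * L t * P) t := by
  intro t ht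
  subst hQ
  have dyson := integral_duhamel_eq_sub (P := P) (F := fun s => G t s * ((1 - P) * L t * P)) ht
    hL.continuousOn (fun s _ => hE s) fun s hs => by
      simpa only [neg_mul, mul_assoc] using (hG_s s t hs.2).mul_const ((1 - P) * L t * P)
  simp only [hG_diag, hE₀, one_mul, ← mul_assoc] at dyson
  convert (hE t).mul_const P using 1
  rw [dyson]
  noncomm_ring

/-- **The Nakajima–Mori–Zwanzig operator identity.**  Let `𝔅` be a unital (real) Banach algebra,
`L : ℝ → 𝔅` continuous, `P ∈ 𝔅` idempotent with complement `Q = 1 − P`.  Let `E` solve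
`E(t₀) = 1`, `E'(t) = E(t)·L(t)`, and let the orthogonal-dynamics propagator `G` satisfy
`G(t,t) = 1`, `∂G/∂t(t,s) = G(t,s)·Q·L(t)` and `∂G/∂s(t,s) = −Q·L(s)·G(t,s)` for `s ≤ t`.  Then
for all `t ≥ t₀`,
`d/dt[E(t)·P] = E(t)·P·L(t)·P + G(t,t₀)·Q·L(t)·P + ∫_{t₀}^{t} E(s)·P·L(s)·G(t,s)·Q·L(t)·P ds`. -/
theorem nmz_operator_identity {𝔅 : Type*} [NormedRing 𝔅] [NormedAlgebra ℝ 𝔅] [CompleteSpace 𝔅]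
    (L : ℝ → 𝔅) (hL : Continuous L)
    (P : 𝔅) (hP : P * P = P) (Q : 𝔅) (hQ : Q = 1 - P)
    (E : ℝ → 𝔅) (t₀ : ℝ)
    (hE₀ : E t₀ = 1)
    (hE : ∀ t : ℝ, HasDerivAt E (E t * L t) t)
    (G : ℝ → ℝ → 𝔅)
    (hG_diag : ∀ t : ℝ, G t t = 1)
    (hG_t : ∀ s t : ℝ, s ≤ t → HasDerivAt (fun u => G u s) (G t s * (Q * L t)) t)
    (hG_s : ∀ s t : ℝ, s ≤ t → HasDerivAt (fun u => G t u) (-(Q * L s * G t s)) s)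
    (hG_cont : Continuous fun p : ℝ × ℝ => G p.1 p.2) :
    ∀ t : ℝ, t₀ ≤ t →
      HasDerivAt (fun u => E u * P)
        (E t * P * L t * P + G t t₀ * Q * L t * P +
          ∫ s in t₀..t, E s * P * L s * G t s * Q * L t * P) t :=
  nmz_operator_identity_general L hL P Q hQ E t₀ hE₀ hE G hG_diag hG_s
end

section
/- Let λ be a nonzero real number and define b : ℝ → ℝ by b(t) = (1 + 2·cos(2λt))/3. Then b(0) = 1 and for every t ≥ 0, b'(t) = −(8/3)·λ² ∫₀ᵗ cos(2λ(t−s)/√3)·b(s) ds. -/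
/-!
Writing `μ = 2λ/√3` and `ω = 2λ`, the memory kernel is `cos (μ (t - s))` and
`b = (cos (0 · s) + 2 cos (ω s)) / 3`, so the integral is a combination of two convolutions
`cos (μ ·) * cos (ω ·)`, each equal to `(ω sin ωt - μ sin μt) / (ω² - μ²)` (compare Laplace
transforms). Because `ω² = 3μ²`, the `μ sin μt` contributions cancel and what is left is
`b'(t) = -(4/3) λ sin 2λt`.
-/

open Real intervalIntegral

/-- Multiplied through by `ω² - μ²` so that the resonant cases `ω = ±μ` need no separate
treatment. -/
theorem sq_sub_sq_mul_integral_cos_mul_cos (μ ω t : ℝ) :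
    (ω ^ 2 - μ ^ 2) * ∫ s in (0:ℝ)..t, cos (μ * (t - s)) * cos (ω * s) =
      ω * sin (ω * t) - μ * sin (μ * t) := by
  have primitive : ∀ s : ℝ, HasDerivAt
      (fun s => ω * cos (μ * (t - s)) * sin (ω * s) + μ * sin (μ * (t - s)) * cos (ω * s))
      ((ω ^ 2 - μ ^ 2) * (cos (μ * (t - s)) * cos (ω * s))) s := by
    intro s
    have inner : HasDerivAt (fun s => μ * (t - s)) (-μ) s := by
      simpa using ((hasDerivAt_id s).const_sub t).const_mul μ
    have outer : HasDerivAt (fun s => ω * s) ω s := by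
      simpa using (hasDerivAt_id s).const_mul ω
    exact (((inner.cos.const_mul ω).fun_mul outer.sin).fun_add
      ((inner.sin.const_mul μ).fun_mul outer.cos)).congr_deriv (by ring)
  rw [← integral_const_mul, integral_eq_sub_of_hasDerivAt (fun s _ => primitive s)
    (by apply Continuous.intervalIntegrable; fun_prop)]
  simp

theorem volterra_solution_su2_state_general
    (lam : ℝ) (b : ℝ → ℝ)
    (hb : ∀ t : ℝ, b t = (1 + 2 * Real.cos (2 * lam * t)) / 3) :
    b 0 = 1 ∧
    ∀ t : ℝ, 0 ≤ t →
      HasDerivAt b (-(8 / 3) * lam ^ 2 *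
        ∫ s in (0:ℝ)..t, Real.cos (2 * lam * (t - s) / Real.sqrt 3) * b s) t := by
  obtain rfl : b = fun t => (1 + 2 * cos (2 * lam * t)) / 3 := funext hb
  refine ⟨by norm_num, fun t _ => ?_⟩
  have hderiv : HasDerivAt (fun t => (1 + 2 * cos (2 * lam * t)) / 3)
      (-(4 / 3) * lam * sin (2 * lam * t)) t :=
    ((((hasDerivAt_id' t).const_mul (2 * lam)).cos.const_mul 2).const_add 1).div_const 3
      |>.congr_deriv (by ring)
  set μ := 2 * lam / √3
  have hμ : μ ^ 2 = 4 * lam ^ 2 / 3 := by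
    rw [div_pow, sq_sqrt zero_le_three]; ring
  have split : ∫ s in (0:ℝ)..t, cos (2 * lam * (t - s) / √3) * ((1 + 2 * cos (2 * lam * s)) / 3)
      = (∫ s in (0:ℝ)..t, cos (μ * (t - s)) * cos (0 * s)) / 3
        + 2 / 3 * ∫ s in (0:ℝ)..t, cos (μ * (t - s)) * cos (2 * lam * s) := by
    rw [← integral_div, ← integral_const_mul, ← integral_add]
    · congr 1 with s
      rw [zero_mul, cos_zero, mul_div_right_comm (2 * lam) (t - s)]
      ring
    all_goals apply Continuous.intervalIntegrable; fun_prop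
  have const_kernel := sq_sub_sq_mul_integral_cos_mul_cos μ 0 t
  have cos_kernel := sq_sub_sq_mul_integral_cos_mul_cos μ (2 * lam) t
  convert hderiv using 1
  rw [split]
  clear_value μ
  linear_combination (2 / 3) * const_kernel - (2 / 3) * cos_kernel
    + (2 / 3) * ((∫ s in (0:ℝ)..t, cos (μ * (t - s)) * cos (0 * s))
      - ∫ s in (0:ℝ)..t, cos (μ * (t - s)) * cos (2 * lam * s)) * hμ

/-- **The Volterra integro-differential equation for the projected state on SU(2).**  For a
nonzero real `λ`, the function `b(t) = (1 + 2·cos(2λt))/3` satisfies `b(0) = 1` and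
`b'(t) = −(8/3)·λ² ∫₀ᵗ cos(2λ(t−s)/√3)·b(s) ds` for every `t ≥ 0`. -/
theorem volterra_solution_su2_state
    (lam : ℝ) (h_lam : lam ≠ 0) (b : ℝ → ℝ)
    (hb : ∀ t : ℝ, b t = (1 + 2 * Real.cos (2 * lam * t)) / 3) :
    b 0 = 1 ∧
    ∀ t : ℝ, 0 ≤ t →
      HasDerivAt b (-(8 / 3) * lam ^ 2 *
        ∫ s in (0:ℝ)..t, Real.cos (2 * lam * (t - s) / Real.sqrt 3) * b s) t :=
  volterra_solution_su2_state_general lam b hb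
end

section
/- (Rodrigues formula.) Let x, y, z ∈ ℝ, not all zero, set r = √(x² + y² + z²), and let X be the real 3×3 skew-symmetric matrix with rows (0, −z, y), (z, 0, −x), (−y, x, 0). Then for every t ∈ ℝ, the matrix exponential satisfies exp(tX) = I + (sin(rt)/r)·X + ((1 − cos(rt))/r²)·X². -/
/-!
Since `X³ = -r²X`, every odd power of `tX` is a scalar multiple of `X` and every nonzero even
power a scalar multiple of `X²`; the scalars are exactly the terms of the sine and cosine series
of `rt`, divided by `r` and `r²`. Splitting the exponential series into even and odd parts
therefore sums it in closed form.
-/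

open scoped Nat

section CubeRelation

variable {R 𝔸 : Type*} [CommSemiring R] [Semiring 𝔸] [Algebra R 𝔸] {A : 𝔸} {c : R}

theorem pow_two_mul_add_one_of_pow_three (hA : A ^ 3 = c • A) (k : ℕ) :
    A ^ (2 * k + 1) = c ^ k • A := by
  induction k with
  | zero => simp
  | succ k ih =>
    calc A ^ (2 * (k + 1) + 1) = A ^ (2 * k + 1) * A ^ 2 := by rw [← pow_add]; ring_nf
      _ = c ^ (k + 1) • A := by rw [ih, smul_mul_assoc, ← pow_succ', hA, smul_smul, pow_succ]

theorem pow_two_mul_add_two_of_pow_three (hA : A ^ 3 = c • A) (k : ℕ) :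
    A ^ (2 * k + 2) = c ^ k • A ^ 2 := by
  rw [pow_succ, pow_two_mul_add_one_of_pow_three hA, smul_mul_assoc, ← sq]

end CubeRelation

section Rodrigues

variable {𝔸 : Type*} [Ring 𝔸] [Algebra ℝ 𝔸] {A : 𝔸} {r : ℝ}

theorem inv_factorial_smul_pow_odd_of_pow_three (hA : A ^ 3 = -r ^ 2 • A) (hr : r ≠ 0)
    (t : ℝ) (k : ℕ) :
    ((2 * k + 1)! : ℝ)⁻¹ • (t • A) ^ (2 * k + 1) =
      ((-1) ^ k * (r * t) ^ (2 * k + 1) / (2 * k + 1)! / r) • A := by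
  rw [smul_pow, pow_two_mul_add_one_of_pow_three hA, smul_smul, smul_smul, neg_pow, mul_pow,
    ← pow_mul]
  congr 1
  field_simp
  ring

-- Stated in the shape of the cosine series shifted by one term, whose sum is `cos (r * t) - 1`.
theorem inv_factorial_smul_pow_even_of_pow_three (hA : A ^ 3 = -r ^ 2 • A) (hr : r ≠ 0)
    (t : ℝ) (k : ℕ) :
    ((2 * (k + 1))! : ℝ)⁻¹ • (t • A) ^ (2 * (k + 1)) =
      (-((-1) ^ (k + 1) * (r * t) ^ (2 * (k + 1)) / (2 * (k + 1))!) / r ^ 2) • A ^ 2 := by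
  rw [mul_add_one, smul_pow, pow_two_mul_add_two_of_pow_three hA, smul_smul, smul_smul, neg_pow,
    mul_pow, ← pow_mul]
  congr 1
  field_simp
  ring

variable [TopologicalSpace 𝔸] [ContinuousSMul ℝ 𝔸]

theorem hasSum_expSeries_odd_of_pow_three (hA : A ^ 3 = -r ^ 2 • A) (hr : r ≠ 0) (t : ℝ) :
    HasSum (fun k => ((2 * k + 1)! : ℝ)⁻¹ • (t • A) ^ (2 * k + 1))
      ((Real.sin (r * t) / r) • A) := by
  simp_rw [inv_factorial_smul_pow_odd_of_pow_three hA hr]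
  exact ((Real.hasSum_sin (r * t)).div_const r).smul_const A

theorem hasSum_expSeries_even_of_pow_three [IsTopologicalAddGroup 𝔸] (hA : A ^ 3 = -r ^ 2 • A)
    (hr : r ≠ 0) (t : ℝ) :
    HasSum (fun k => ((2 * k)! : ℝ)⁻¹ • (t • A) ^ (2 * k))
      (1 + ((1 - Real.cos (r * t)) / r ^ 2) • A ^ 2) := by
  have hcos := (hasSum_nat_add_iff' 1).mpr (Real.hasSum_cos (r * t))
  simp only [Finset.range_one, Finset.sum_singleton, mul_zero, pow_zero, Nat.factorial_zero,
    Nat.cast_one, div_one, mul_one] at hcos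
  refine (hasSum_nat_add_iff' 1).mp ?_
  simp only [Finset.range_one, Finset.sum_singleton, mul_zero, pow_zero, Nat.factorial_zero,
    Nat.cast_one, inv_one, one_smul, add_sub_cancel_left,
    inv_factorial_smul_pow_even_of_pow_three hA hr]
  rw [← neg_sub]
  exact (hcos.neg.div_const (r ^ 2)).smul_const (A ^ 2)

theorem exp_smul_eq_of_pow_three [IsTopologicalRing 𝔸] [T2Space 𝔸] (hA : A ^ 3 = -r ^ 2 • A)
    (hr : r ≠ 0) (t : ℝ) :
    NormedSpace.exp (t • A) =
      1 + (Real.sin (r * t) / r) • A + ((1 - Real.cos (r * t)) / r ^ 2) • A ^ 2 := by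
  rw [NormedSpace.exp_eq_tsum ℝ, add_right_comm]
  refine HasSum.tsum_eq ?_
  exact HasSum.even_add_odd (f := fun n => (n ! : ℝ)⁻¹ • (t • A) ^ n)
    (hasSum_expSeries_even_of_pow_three hA hr t) (hasSum_expSeries_odd_of_pow_three hA hr t)

end Rodrigues

theorem crossMatrix_pow_three (x y z : ℝ) :
    !![(0:ℝ), -z, y; z, 0, -x; -y, x, 0] ^ 3 =
      -(x ^ 2 + y ^ 2 + z ^ 2) • !![(0:ℝ), -z, y; z, 0, -x; -y, x, 0] := by
  ext i j
  fin_cases i <;> fin_cases j <;> simp [pow_succ, Matrix.mul_apply, Fin.sum_univ_succ] <;> ring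

/-- **The Rodrigues formula.**  Let `(x,y,z) ∈ ℝ³` be nonzero, `r = √(x² + y² + z²)`, and let
`X` be the associated `3×3` skew-symmetric matrix.  Then for every `t ∈ ℝ`,
`exp(tX) = I + (sin(rt)/r)·X + ((1 − cos(rt))/r²)·X²`. -/
theorem rodrigues_formula
    (x y z : ℝ) (h : ¬(x = 0 ∧ y = 0 ∧ z = 0)) (t : ℝ) :
    NormedSpace.exp (t • !![(0:ℝ), -z, y; z, 0, -x; -y, x, 0]) =
      (1 : Matrix (Fin 3) (Fin 3) ℝ)
        + (Real.sin (Real.sqrt (x ^ 2 + y ^ 2 + z ^ 2) * t) /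
            Real.sqrt (x ^ 2 + y ^ 2 + z ^ 2)) • !![(0:ℝ), -z, y; z, 0, -x; -y, x, 0]
        + ((1 - Real.cos (Real.sqrt (x ^ 2 + y ^ 2 + z ^ 2) * t)) /
            Real.sqrt (x ^ 2 + y ^ 2 + z ^ 2) ^ 2) •
              (!![(0:ℝ), -z, y; z, 0, -x; -y, x, 0] * !![(0:ℝ), -z, y; z, 0, -x; -y, x, 0]) := by
  have hpos : 0 < x ^ 2 + y ^ 2 + z ^ 2 := by
    by_contra! hle
    refine h ⟨?_, ?_, ?_⟩ <;> nlinarith [sq_nonneg x, sq_nonneg y, sq_nonneg z]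
  have hX := crossMatrix_pow_three x y z
  rw [← Real.sq_sqrt hpos.le] at hX
  rw [← sq]
  exact exp_smul_eq_of_pow_three hX (Real.sqrt_ne_zero'.mpr hpos) t
end
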